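/- arXiv:2306.11855 — 3 statements merged into one kernel-verified Lean document; each statement's English description precedes it below -/
import Mathlib

section
/- In the linear regression model y = xᵀθ + ε with ε ~ N(0, σ²) and parameter vector θ ∈ ℝ^d, two features i, j ∈ {1,…,d} have symmetric influence on Y (i.e., the conditional density of Y given X = x, which is the N(xᵀθ, σ²) density, coincides with the conditional density of Y given X = x_swap(i,j) for every x ∈ ℝ^d) if and only if θ_i = θ_j. -/
open MeasureTheory ProbabilityTheory Real

/-- `swapVec i j x` is the vector obtained from `x` by swapping coordinates `i` and `j`. -/
def swapVec {d : ℕ} (i j : Fin d) (x : Fin d → ℝ) : Fin d → ℝ := fun k => x (Equiv.swap i j k)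

lemma gaussianReal_mean_inj {m m' : ℝ} {v : NNReal} (hv : v ≠ 0)
    (h : gaussianReal m v = gaussianReal m' v) : m = m' := by
  rw [gaussianReal_of_var_ne_zero _ hv, gaussianReal_of_var_ne_zero _ hv] at h
  have hae : gaussianPDF m v =ᵐ[volume] gaussianPDF m' v :=
    (withDensity_eq_iff_of_sigmaFinite (measurable_gaussianPDF m v).aemeasurable
      (measurable_gaussianPDF m' v).aemeasurable).mp h
  have hae' : gaussianPDFReal m v =ᵐ[volume] gaussianPDFReal m' v := by
    filter_upwards [hae] with x hx
    have := congrArg ENNReal.toReal hx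
    rwa [gaussianPDF, gaussianPDF, ENNReal.toReal_ofReal (gaussianPDFReal_nonneg _ _ _),
      ENNReal.toReal_ofReal (gaussianPDFReal_nonneg _ _ _)] at this
  have heq : gaussianPDFReal m v = gaussianPDFReal m' v := by
    have hc : ∀ μ : ℝ, Continuous (gaussianPDFReal μ v) := fun μ => by
      rw [gaussianPDFReal_def]
      fun_prop
    exact (Continuous.ae_eq_iff_eq volume (hc m) (hc m')).mp hae'
  have := congrFun heq m
  rw [gaussianPDFReal, gaussianPDFReal] at this
  have hsq : (√(2 * π * v))⁻¹ ≠ 0 := by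
    have : (0:ℝ) < 2 * π * v := by
      have := pi_pos
      have hv' : (0:ℝ) < v := by positivity
      positivity
    positivity
  have hexp : rexp (-(m - m) ^ 2 / (2 * v)) = rexp (-(m - m') ^ 2 / (2 * v)) :=
    mul_left_cancel₀ hsq this
  have h2 : -(m - m) ^ 2 / (2 * (v:ℝ)) = -(m - m') ^ 2 / (2 * (v:ℝ)) :=
    Real.exp_injective hexp
  have hv' : (0:ℝ) < v := by positivity
  have : (m - m') ^ 2 = 0 := by
    field_simp at h2
    nlinarith
  nlinarith [sq_nonneg (m - m')]

/-- In the linear regression model `y = xᵀθ + ε` with `ε ~ N(0, σ²)`, the conditional law of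
`Y` given `X = x` is `N(xᵀθ, σ²)`.  Two features `i, j` have symmetric influence on `Y`
(the conditional law is unchanged when coordinates `i` and `j` of `x` are swapped, for
every `x`) iff `θ i = θ j`. -/
theorem linear_regression_symmetric_influence_iff {d : ℕ} (θ : Fin d → ℝ) (σ : ℝ)
    (hσ : 0 < σ) (i j : Fin d) :
    (∀ x : Fin d → ℝ,
        gaussianReal (∑ k, x k * θ k) ⟨σ ^ 2, sq_nonneg σ⟩ =
          gaussianReal (∑ k, swapVec i j x k * θ k) ⟨σ ^ 2, sq_nonneg σ⟩)
      ↔ θ i = θ j := by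
  have hv : (⟨σ ^ 2, sq_nonneg σ⟩ : NNReal) ≠ 0 := by
    intro h
    have : σ ^ 2 = 0 := congrArg Subtype.val h
    nlinarith
  constructor
  · intro h
    have h1 := gaussianReal_mean_inj hv (h (fun k => if k = i then 1 else 0))
    simp only [swapVec] at h1
    rw [Finset.sum_eq_single i (by intro b _ hb; simp [hb]) (by simp),
      Finset.sum_eq_single j ?_ (by simp)] at h1
    · simpa using h1
    · intro b _ hb
      have : Equiv.swap i j b ≠ i := fun hc => hb (by
        have := congrArg (Equiv.swap i j) hc
        simpa using this)
      simp [this]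
  · intro h x
    congr 1
    rw [← Equiv.sum_comp (Equiv.swap i j) (fun k => x k * θ k)]
    apply Finset.sum_congr rfl
    intro k _
    simp only [swapVec]
    rcases eq_or_ne k i with rfl | hki
    · simp [Equiv.swap_apply_left, h]
    rcases eq_or_ne k j with rfl | hkj
    · simp [Equiv.swap_apply_right, h]
    · simp [Equiv.swap_apply_of_ne_of_ne hki hkj]
end

section
/- Let (X^(1),Y^(1)) and (X^(2),Y^(2)) be two i.i.d. samples from a joint law p_{X,Y} on ℝ^d × ℝ, let i, j ∈ {1,…,d}, and let T : ℝ^d × ℝ → ℝ be measurable with ties T(X^(1),Y^(1)) = T(X^(2)_swap(i,j), Y^(2)) occurring with probability zero (or broken by an independent fair coin). Define π = P( T(X^(1),Y^(1)) ≥ T(X^(2)_swap(i,j), Y^(2)) ). Then |π − 1/2| ≤ E_X[ d_TV( ℒ(Y | X_swap(i,j)), ℒ(Y | X) ) ] + d_TV( ℒ(X), ℒ(X_swap(i,j)) ). -/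
open MeasureTheory ProbabilityTheory Real

/-- Total variation distance between two measures:
`d_TV(p, q) = sup_{measurable s} |p(s) - q(s)|`. -/
noncomputable def tvDist {α : Type*} [MeasurableSpace α] (p q : Measure α) : ℝ :=
  ⨆ s : {s : Set α // MeasurableSet s}, |(p s.1).toReal - (q s.1).toReal|

/-! Let `ν` be the law of `Z₂` with coordinates `i` and `j` of `X` swapped. Exchanging the
independent samples `Z₁ ~ μ` and `Z₂' ~ ν` maps the event `{T(Z₂') ≤ T(Z₁)}` to its complement up
to the null set of ties, and changes its probability by at most `2 d_TV(μ, ν)`; hence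
`|π - 1/2| ≤ d_TV(μ, ν)`. Writing `μ = μ_X ⊗ κ` and `ν = (swap_* μ_X) ⊗ (κ ∘ swap)`, the triangle
inequality through `μ_X ⊗ (κ ∘ swap)` splits `d_TV(μ, ν)` into the conditional term, bounded
fibrewise, and the marginal term, bounded by data processing through the kernel `κ ∘ swap`. -/

section TotalVariation

variable {α : Type*} [MeasurableSpace α] {p q r : Measure α}

lemma bddAbove_range_abs_measureReal_sub [IsFiniteMeasure p] [IsFiniteMeasure q] {ι : Type*}
    (s : ι → Set α) : BddAbove (Set.range fun i => |p.real (s i) - q.real (s i)|) := by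
  refine ⟨p.real Set.univ + q.real Set.univ, ?_⟩
  rintro _ ⟨i, rfl⟩
  calc |p.real (s i) - q.real (s i)| ≤ |p.real (s i)| + |q.real (s i)| := abs_sub _ _
    _ ≤ p.real Set.univ + q.real Set.univ := by
      rw [abs_of_nonneg measureReal_nonneg, abs_of_nonneg measureReal_nonneg]
      exact add_le_add (measureReal_mono (Set.subset_univ _))
        (measureReal_mono (Set.subset_univ _))

lemma abs_measureReal_sub_le_tvDist [IsFiniteMeasure p] [IsFiniteMeasure q] {s : Set α}
    (hs : MeasurableSet s) : |p.real s - q.real s| ≤ tvDist p q :=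
  le_ciSup (bddAbove_range_abs_measureReal_sub Subtype.val)
    (⟨s, hs⟩ : {s : Set α // MeasurableSet s})

lemma tvDist_le {c : ℝ} (h : ∀ s, MeasurableSet s → |p.real s - q.real s| ≤ c) :
    tvDist p q ≤ c :=
  ciSup_le fun s => h s.1 s.2

lemma tvDist_nonneg [IsFiniteMeasure p] [IsFiniteMeasure q] : 0 ≤ tvDist p q :=
  (abs_nonneg _).trans (abs_measureReal_sub_le_tvDist (p := p) (q := q) MeasurableSet.empty)

lemma tvDist_comm (p q : Measure α) : tvDist p q = tvDist q p := by
  simp only [tvDist, abs_sub_comm]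

lemma tvDist_triangle [IsFiniteMeasure p] [IsFiniteMeasure q] [IsFiniteMeasure r] :
    tvDist p r ≤ tvDist p q + tvDist q r :=
  tvDist_le fun _ hs => (abs_sub_le _ _ _).trans
    (add_le_add (abs_measureReal_sub_le_tvDist hs) (abs_measureReal_sub_le_tvDist hs))

lemma tvDist_le_one [IsProbabilityMeasure p] [IsProbabilityMeasure q] : tvDist p q ≤ 1 :=
  tvDist_le fun _ _ => abs_sub_le_of_nonneg_of_le measureReal_nonneg measureReal_le_one
    measureReal_nonneg measureReal_le_one

lemma abs_integral_sub_integral_le_tvDist [IsFiniteMeasure p] [IsFiniteMeasure q] {g : α → ℝ}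
    (hg : Measurable g) (hg0 : ∀ x, 0 ≤ g x) (hg1 : ∀ x, g x ≤ 1) :
    |∫ x, g x ∂p - ∫ x, g x ∂q| ≤ tvDist p q := by
  have layer_cake (m : Measure α) [IsFiniteMeasure m] :
      ∫ x, g x ∂m = ∫ t in (0 : ℝ)..1, m.real {x | t ≤ g x} := by
    rw [intervalIntegral.integral_of_le zero_le_one]
    refine Integrable.integral_eq_integral_Ioc_meas_le ?_ (ae_of_all _ hg0) (ae_of_all _ hg1)
    refine .of_bound hg.aestronglyMeasurable 1 (ae_of_all _ fun x => ?_)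
    rw [Real.norm_of_nonneg (hg0 x)]
    exact hg1 x
  have antitone_superlevel (m : Measure α) [IsFiniteMeasure m] :
      Antitone fun t => m.real {x | t ≤ g x} :=
    fun _ _ hst => measureReal_mono fun _ hx => hst.trans hx
  rw [layer_cake p, layer_cake q, ← intervalIntegral.integral_sub
    (antitone_superlevel p).intervalIntegrable (antitone_superlevel q).intervalIntegrable]
  calc _ ≤ ∫ t in (0 : ℝ)..1, |p.real {x | t ≤ g x} - q.real {x | t ≤ g x}| :=
        intervalIntegral.abs_integral_le_integral_abs zero_le_one
    _ ≤ ∫ _ in (0 : ℝ)..1, tvDist p q :=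
        intervalIntegral.integral_mono_on zero_le_one
          ((antitone_superlevel p).intervalIntegrable.sub
            (antitone_superlevel q).intervalIntegrable).abs
          intervalIntegrable_const
          fun t _ => abs_measureReal_sub_le_tvDist (hg measurableSet_Ici)
    _ = tvDist p q := by simp

end TotalVariation

section Measurability

variable {α : Type*} [MeasurableSpace α]

lemma tvDist_eq_iSup_of_measureDense {p q : Measure α} [IsFiniteMeasure p] [IsFiniteMeasure q]
    {𝒜 : Set (Set α)} (h𝒜 : (p + q).MeasureDense 𝒜) :
    tvDist p q = ⨆ t : 𝒜, |p.real t - q.real t| := by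
  have : Nonempty 𝒜 := h𝒜.nonempty.to_subtype
  refine le_antisymm (tvDist_le fun s hs => le_of_forall_pos_le_add fun ε hε => ?_)
    (ciSup_le fun t => abs_measureReal_sub_le_tvDist (h𝒜.measurable t t.2))
  obtain ⟨t, ht, hst⟩ := h𝒜.approx s hs (measure_ne_top _ _) ε hε
  have hst_real : p.real (symmDiff s t) + q.real (symmDiff s t) ≤ ε := by
    rw [← measureReal_add_apply]
    exact ENNReal.toReal_le_of_le_ofReal hε.le hst.le
  have hp := abs_measureReal_sub_le_measureReal_symmDiff (μ := p) hs.nullMeasurableSet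
    (h𝒜.measurable t ht).nullMeasurableSet
  have hq := abs_measureReal_sub_le_measureReal_symmDiff (μ := q) hs.nullMeasurableSet
    (h𝒜.measurable t ht).nullMeasurableSet
  have hpq : |p.real t - q.real t| ≤ ⨆ t : 𝒜, |p.real t - q.real t| :=
    le_ciSup (bddAbove_range_abs_measureReal_sub Subtype.val) ⟨t, ht⟩
  have h₁ := abs_sub_le (p.real s) (p.real t) (q.real s)
  have h₂ := abs_sub_le (p.real t) (q.real t) (q.real s)
  rw [abs_sub_comm (q.real t)] at h₂
  linarith

lemma isSetAlgebra_measurableSet : IsSetAlgebra {s : Set α | MeasurableSet s} where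
  empty_mem := .empty
  compl_mem _ := .compl
  union_mem _ _ := .union

/-- The supremum defining `tvDist` may be taken over a countable algebra generating the
σ-algebra, which makes it a countable supremum of measurable functions of `x`. -/
lemma measurable_tvDist_kernel {β : Type*} [MeasurableSpace β]
    [MeasurableSpace.CountablyGenerated α] (κ η : Kernel β α) [IsFiniteKernel κ]
    [IsFiniteKernel η] :
    Measurable fun x => tvDist (κ x) (η x) := by
  set 𝒜 := generateSetAlgebra (MeasurableSpace.countableGeneratingSet α)
  have hgen : ‹MeasurableSpace α› = MeasurableSpace.generateFrom 𝒜 := by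
    rw [generateFrom_generateSetAlgebra_eq, MeasurableSpace.generateFrom_countableGeneratingSet]
  have h𝒜 : 𝒜 ⊆ {s | MeasurableSet s} :=
    isSetAlgebra_measurableSet.generateSetAlgebra_subset
      fun _ => MeasurableSpace.measurableSet_countableGeneratingSet
  have : Countable 𝒜 :=
    (countable_generateSetAlgebra MeasurableSpace.countable_countableGeneratingSet).to_subtype
  simp_rw [tvDist_eq_iSup_of_measureDense
    (Measure.MeasureDense.of_generateFrom_isSetAlgebra_finite _
      isSetAlgebra_generateSetAlgebra hgen)]
  exact .iSup fun t => ((κ.measurable_coe (h𝒜 t.2)).ennreal_toReal.sub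
    (η.measurable_coe (h𝒜 t.2)).ennreal_toReal).abs

lemma integrable_tvDist_kernel {β : Type*} [MeasurableSpace β]
    [MeasurableSpace.CountablyGenerated α] (κ η : Kernel β α) [IsMarkovKernel κ] [IsMarkovKernel η]
    (p : Measure β) [IsFiniteMeasure p] :
    Integrable (fun x => tvDist (κ x) (η x)) p :=
  .of_bound (measurable_tvDist_kernel κ η).aestronglyMeasurable 1 <| ae_of_all _ fun _ => by
    rw [Real.norm_of_nonneg tvDist_nonneg]
    exact tvDist_le_one

end Measurability

section CompProd

variable {β γ : Type*} [MeasurableSpace β] [MeasurableSpace γ]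

lemma measureReal_compProd_apply (p : Measure β) [SFinite p] (κ : Kernel β γ) [IsFiniteKernel κ]
    {s : Set (β × γ)} (hs : MeasurableSet s) :
    (p ⊗ₘ κ).real s = ∫ x, (κ x).real (Prod.mk x ⁻¹' s) ∂p := by
  rw [measureReal_def, Measure.compProd_apply hs, ← integral_toReal
    (κ.measurable_kernel_prodMk_left hs).aemeasurable (ae_of_all _ fun _ => measure_lt_top _ _)]
  rfl

lemma tvDist_compProd_right_le (p : Measure β) [IsFiniteMeasure p] (κ η : Kernel β γ)
    [IsMarkovKernel κ] [IsMarkovKernel η] (hint : Integrable (fun x => tvDist (κ x) (η x)) p) :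
    tvDist (p ⊗ₘ κ) (p ⊗ₘ η) ≤ ∫ x, tvDist (κ x) (η x) ∂p := by
  refine tvDist_le fun s hs => ?_
  have integrable_section (ξ : Kernel β γ) [IsMarkovKernel ξ] :
      Integrable (fun x => (ξ x).real (Prod.mk x ⁻¹' s)) p :=
    .of_bound (ξ.measurable_kernel_prodMk_left hs).ennreal_toReal.aestronglyMeasurable 1 <|
      ae_of_all _ fun _ => by
        rw [Real.norm_of_nonneg measureReal_nonneg]
        exact measureReal_le_one
  rw [measureReal_compProd_apply p κ hs, measureReal_compProd_apply p η hs,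
    ← integral_sub (integrable_section κ) (integrable_section η)]
  exact abs_integral_le_integral_abs.trans <|
    integral_mono ((integrable_section κ).sub (integrable_section η)).abs hint
      fun x => abs_measureReal_sub_le_tvDist (measurable_prodMk_left hs)

lemma tvDist_compProd_left_le (p p' : Measure β) [IsFiniteMeasure p] [IsFiniteMeasure p']
    (κ : Kernel β γ) [IsMarkovKernel κ] :
    tvDist (p ⊗ₘ κ) (p' ⊗ₘ κ) ≤ tvDist p p' :=
  tvDist_le fun s hs => by
    rw [measureReal_compProd_apply p κ hs, measureReal_compProd_apply p' κ hs]
    exact abs_integral_sub_integral_le_tvDist (κ.measurable_kernel_prodMk_left hs).ennreal_toReal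
      (fun _ => measureReal_nonneg) (fun _ => measureReal_le_one)

lemma tvDist_prod_comm_le (μ ν : Measure β) [IsProbabilityMeasure μ] [IsProbabilityMeasure ν] :
    tvDist (μ.prod ν) (ν.prod μ) ≤ 2 * tvDist μ ν := by
  simp_rw [← Measure.compProd_const]
  calc _ ≤ tvDist (μ ⊗ₘ Kernel.const β ν) (μ ⊗ₘ Kernel.const β μ)
        + tvDist (μ ⊗ₘ Kernel.const β μ) (ν ⊗ₘ Kernel.const β μ) := tvDist_triangle
    _ ≤ (∫ _, tvDist ν μ ∂μ) + tvDist μ ν :=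
        add_le_add (tvDist_compProd_right_le _ _ _ (integrable_const (tvDist ν μ)))
          (tvDist_compProd_left_le _ _ _)
    _ = 2 * tvDist μ ν := by simp [tvDist_comm ν μ]; ring

lemma map_prodMap_compProd (m : Measure β) [SFinite m] (κ : Kernel β γ) [IsSFiniteKernel κ]
    {f g : β → β} (hf : Measurable f) (hg : Measurable g) (hgf : Function.LeftInverse g f) :
    (m ⊗ₘ κ).map (Prod.map f id) = m.map f ⊗ₘ κ.comap g hg := by
  ext s hs
  rw [Measure.map_apply (hf.prodMap measurable_id) hs,
    Measure.compProd_apply (hf.prodMap measurable_id hs), Measure.compProd_apply hs,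
    lintegral_map (Kernel.measurable_kernel_prodMk_left hs) hf]
  refine lintegral_congr fun x => ?_
  rw [Kernel.comap_apply, hgf]
  rfl

end CompProd

lemma abs_measureReal_prod_setOf_le_sub_half_le_tvDist {E : Type*} [MeasurableSpace E]
    (μ ν : Measure E) [IsProbabilityMeasure μ] [IsProbabilityMeasure ν]
    {S : E → ℝ} (hS : Measurable S) (hties : (μ.prod ν) {z | S z.1 = S z.2} = 0) :
    |(μ.prod ν).real {z | S z.2 ≤ S z.1} - 1 / 2| ≤ tvDist μ ν := by
  set A := {z : E × E | S z.2 ≤ S z.1}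
  set B := {z : E × E | S z.1 ≤ S z.2}
  have hA : MeasurableSet A := measurableSet_le (hS.comp measurable_snd) (hS.comp measurable_fst)
  have hB : MeasurableSet B := measurableSet_le (hS.comp measurable_fst) (hS.comp measurable_snd)
  have hsum : (μ.prod ν).real A + (μ.prod ν).real B = 1 := by
    have hunion : A ∪ B = Set.univ := Set.eq_univ_of_forall fun z => le_total (S z.2) (S z.1)
    have hinter : A ∩ B = {z | S z.1 = S z.2} := Set.ext fun z => ⟨fun h => le_antisymm h.2 h.1,
      fun h => ⟨h.ge, h.le⟩⟩
    rw [← measureReal_union_add_inter hB, hunion, hinter, probReal_univ,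
      measureReal_def, hties, ENNReal.toReal_zero, add_zero]
  have hswap : (ν.prod μ).real A = (μ.prod ν).real B := by
    rw [← Measure.prod_swap, measureReal_def, Measure.map_apply measurable_swap hA]
    rfl
  calc |(μ.prod ν).real A - 1 / 2| = |(μ.prod ν).real A - (ν.prod μ).real A| / 2 := by
        rw [hswap, ← abs_two, ← abs_div, abs_two]
        congr 1
        linarith
    _ ≤ tvDist (μ.prod ν) (ν.prod μ) / 2 := by gcongr; exact abs_measureReal_sub_le_tvDist hA
    _ ≤ tvDist μ ν := by linarith [tvDist_prod_comm_le μ ν]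

lemma ProbabilityTheory.IndepFun.abs_measureReal_setOf_le_sub_half_le_tvDist
    {Ω E : Type*} [MeasurableSpace Ω] [MeasurableSpace E] {P : Measure Ω} [IsProbabilityMeasure P]
    {X Y : Ω → E} (hXY : IndepFun X Y P) (hX : Measurable X) (hY : Measurable Y)
    {S : E → ℝ} (hS : Measurable S) (hties : P {ω | S (X ω) = S (Y ω)} = 0) :
    |P.real {ω | S (Y ω) ≤ S (X ω)} - 1 / 2| ≤ tvDist (P.map X) (P.map Y) := by
  have hlaw := (indepFun_iff_map_prod_eq_prod_map_map hX.aemeasurable hY.aemeasurable).mp hXY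
  have := Measure.isProbabilityMeasure_map (μ := P) hX.aemeasurable
  have := Measure.isProbabilityMeasure_map (μ := P) hY.aemeasurable
  have hA : MeasurableSet {z : E × E | S z.2 ≤ S z.1} :=
    measurableSet_le (hS.comp measurable_snd) (hS.comp measurable_fst)
  have hE : MeasurableSet {z : E × E | S z.1 = S z.2} :=
    measurableSet_eq_fun (hS.comp measurable_fst) (hS.comp measurable_snd)
  have hπ : P.real {ω | S (Y ω) ≤ S (X ω)}
      = ((P.map X).prod (P.map Y)).real {z | S z.2 ≤ S z.1} := by
    rw [← hlaw, map_measureReal_apply (hX.prodMk hY) hA]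
    rfl
  rw [hπ]
  refine abs_measureReal_prod_setOf_le_sub_half_le_tvDist _ _ hS ?_
  rwa [← hlaw, Measure.map_apply (hX.prodMk hY) hE]

lemma swapVec_swapVec {d : ℕ} (i j : Fin d) (x : Fin d → ℝ) :
    swapVec i j (swapVec i j x) = x :=
  funext fun k => by simp [swapVec]

lemma measurable_swapVec {d : ℕ} (i j : Fin d) : Measurable (swapVec i j) :=
  measurable_pi_lambda _ fun _ => measurable_pi_apply _

/-- **Deviation of the pairwise comparison probability from 1/2.** For two i.i.d. samples
`Z1 = (X^(1), Y^(1))` and `Z2 = (X^(2), Y^(2))` from a joint law `μ` on `ℝ^d × ℝ` whose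
conditional law of `Y` given `X` is the Markov kernel `κ` (`μ = μ_X ⊗ₘ κ`), and a score
function `T` with ties occurring with probability zero, the probability
`π = P(T(X^(1), Y^(1)) ≥ T(X^(2)_swap(i,j), Y^(2)))` satisfies
`|π - 1/2| ≤ E_X[d_TV(ℒ(Y|X_swap(i,j)), ℒ(Y|X))] + d_TV(ℒ(X), ℒ(X_swap(i,j)))`. -/
theorem pairwise_comparison_probability_deviation
    {Ω : Type*} [MeasurableSpace Ω] (P : Measure Ω) [IsProbabilityMeasure P]
    {d : ℕ} (i j : Fin d)
    (Z1 Z2 : Ω → (Fin d → ℝ) × ℝ) (h1 : Measurable Z1) (h2 : Measurable Z2)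
    (hindep : IndepFun Z1 Z2 P)
    (μ : Measure ((Fin d → ℝ) × ℝ)) [IsProbabilityMeasure μ]
    (hl1 : P.map Z1 = μ) (hl2 : P.map Z2 = μ)
    (κ : Kernel (Fin d → ℝ) ℝ) [IsMarkovKernel κ]
    (hκ : μ = (μ.map Prod.fst) ⊗ₘ κ)
    (T : (Fin d → ℝ) → ℝ → ℝ)
    (hT : Measurable fun z : (Fin d → ℝ) × ℝ => T z.1 z.2)
    (hties : P {ω | T ((Z1 ω).1) ((Z1 ω).2)
        = T (swapVec i j ((Z2 ω).1)) ((Z2 ω).2)} = 0) :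
    |(P {ω | T (swapVec i j ((Z2 ω).1)) ((Z2 ω).2) ≤ T ((Z1 ω).1) ((Z1 ω).2)}).toReal - 1 / 2|
      ≤ (∫ x, tvDist (κ (swapVec i j x)) (κ x) ∂(μ.map Prod.fst)) +
          tvDist (μ.map Prod.fst) ((μ.map Prod.fst).map (swapVec i j)) := by
  set μX := μ.map Prod.fst
  have hsw := measurable_swapVec i j
  set κsw := κ.comap (swapVec i j) hsw
  have hσ : Measurable (Prod.map (swapVec i j) (id : ℝ → ℝ)) := hsw.prodMap measurable_id
  have hν : μ.map (Prod.map (swapVec i j) id) = μX.map (swapVec i j) ⊗ₘ κsw := by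
    rw [hκ]
    exact map_prodMap_compProd μX κ hsw hsw (swapVec_swapVec i j)
  calc _ ≤ tvDist (P.map Z1) (P.map (Prod.map (swapVec i j) id ∘ Z2)) :=
        (hindep.comp measurable_id hσ).abs_measureReal_setOf_le_sub_half_le_tvDist h1
          (hσ.comp h2) hT hties
    _ = tvDist (μX ⊗ₘ κ) (μX.map (swapVec i j) ⊗ₘ κsw) := by
        rw [hl1, ← Measure.map_map hσ h2, hl2, hν, ← hκ]
    _ ≤ tvDist (μX ⊗ₘ κsw) (μX ⊗ₘ κ) + tvDist (μX ⊗ₘ κsw) (μX.map (swapVec i j) ⊗ₘ κsw) := by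
        rw [tvDist_comm (μX ⊗ₘ κsw)]
        exact tvDist_triangle
    _ ≤ _ := add_le_add (tvDist_compProd_right_le _ _ _ (integrable_tvDist_kernel κsw κ μX))
        (tvDist_compProd_left_le _ _ _)
end

section
/- For every γ ≥ 0, the function ψ(γ) = 4 ∫_{1/2}^{1} Φ( γ Φ^{-1}(v) ) dv satisfies ψ(γ) = 1 + (2/π) arctan(γ). In particular, ψ(1) = 3/2. -/
/-
Substituting `v = Φ u` turns `ψ(γ) / 4` into `G(γ) = ∫_{u > 0} φ(u) Φ(γ u) du`. Differentiating
under the integral sign, `G'(γ) = ∫_{u > 0} u φ(u) φ(γ u) du = 1 / (2π (1 + γ²))`, since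
`φ(u) φ(γ u)` is a Gaussian in `u` and `u e^{-b u²}` has the primitive `-e^{-b u²} / (2b)`.
With `G(0) = Φ(0) / 2 = 1/4` this gives `G(γ) = 1/4 + arctan γ / (2π)`.
-/

open MeasureTheory ProbabilityTheory Real

/-- The standard normal cumulative distribution function `Φ`. -/
noncomputable def stdNormalCDF (t : ℝ) : ℝ := (gaussianReal 0 1 (Set.Iic t)).toReal

open Set Filter Topology

@[fun_prop]
lemma continuous_gaussianPDFReal (μ : ℝ) (v : NNReal) : Continuous (gaussianPDFReal μ v) := by
  unfold gaussianPDFReal; fun_prop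

lemma gaussianPDFReal_le_gaussianPDFReal_self (μ : ℝ) (v : NNReal) (x : ℝ) :
    gaussianPDFReal μ v x ≤ gaussianPDFReal μ v μ := by
  simp only [gaussianPDFReal, sub_self]
  refine mul_le_mul_of_nonneg_left (exp_le_exp.mpr ?_) (by positivity)
  rw [zero_pow two_ne_zero, neg_zero, zero_div]
  exact div_nonpos_of_nonpos_of_nonneg (neg_nonpos.mpr (sq_nonneg _)) (by positivity)

lemma gaussianPDFReal_zero_one_mul (x y : ℝ) :
    gaussianPDFReal 0 1 x * gaussianPDFReal 0 1 y = (2 * π)⁻¹ * exp (-(x ^ 2 + y ^ 2) / 2) := by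
  simp only [gaussianPDFReal, NNReal.coe_one, mul_one, sub_zero]
  rw [mul_mul_mul_comm, ← mul_inv, mul_self_sqrt (by positivity), ← exp_add]
  ring_nf

lemma hasDerivAt_cdf_gaussianReal (μ : ℝ) {v : NNReal} (hv : v ≠ 0) (x : ℝ) :
    HasDerivAt (cdf (gaussianReal μ v)) (gaussianPDFReal μ v x) x := by
  have hint := integrable_gaussianPDFReal μ v
  have hcdf : cdf (gaussianReal μ v) =
      fun t ↦ cdf (gaussianReal μ v) 0 + ∫ y in 0..t, gaussianPDFReal μ v y := by
    ext t
    simp only [cdf_eq_real, measureReal_def, gaussianReal_apply_eq_integral μ hv,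
      ENNReal.toReal_ofReal
        (setIntegral_nonneg measurableSet_Iic fun y _ ↦ gaussianPDFReal_nonneg μ v y)]
    rw [← intervalIntegral.integral_Iic_sub_Iic hint.integrableOn hint.integrableOn]
    ring
  rw [hcdf]
  exact ((continuous_gaussianPDFReal μ v).integral_hasStrictDerivAt 0 x).hasDerivAt.const_add _

lemma stdNormalCDF_eq_cdf : stdNormalCDF = cdf (gaussianReal 0 1) := by
  ext t; rw [cdf_eq_real, measureReal_def, stdNormalCDF]

lemma integral_Ioi_mul_exp_neg_mul_sq {b : ℝ} (hb : 0 < b) :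
    ∫ x in Ioi 0, x * exp (-b * x ^ 2) = (2 * b)⁻¹ := by
  have h := integral_mul_cexp_neg_mul_sq (b := (b : ℂ)) (by simpa using hb)
  rw [← Complex.ofReal_inj, ← integral_complex_ofReal]
  push_cast
  exact h

section StdNormal

local notation "Φ" => cdf (gaussianReal 0 1)
local notation "φ" => gaussianPDFReal 0 1

lemma strictMono_cdf_gaussianReal : StrictMono Φ :=
  strictMono_of_hasDerivAt_pos (hasDerivAt_cdf_gaussianReal 0 one_ne_zero)
    (gaussianPDFReal_pos 0 1 · one_ne_zero)

lemma continuous_cdf_gaussianReal : Continuous Φ :=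
  Differentiable.continuous fun x ↦
    (hasDerivAt_cdf_gaussianReal 0 one_ne_zero x).differentiableAt

lemma cdf_gaussianReal_lt_one (x : ℝ) : Φ x < 1 :=
  (strictMono_cdf_gaussianReal (lt_add_one x)).trans_le (cdf_le_one _ _)

lemma integral_Ioi_zero_gaussianPDFReal : ∫ x in Ioi 0, φ x = 1 / 2 := by
  have hexp : (fun x : ℝ ↦ exp (-x ^ 2 / 2)) = fun x ↦ exp (-(1 / 2) * x ^ 2) := by
    ext x; ring_nf
  simp only [gaussianPDFReal, NNReal.coe_one, mul_one, sub_zero]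
  rw [integral_const_mul, hexp, integral_gaussian_Ioi, div_div_eq_mul_div, div_one, mul_comm π]
  field_simp

lemma cdf_gaussianReal_zero : Φ 0 = 1 / 2 := by
  have hint := integrable_gaussianPDFReal 0 1
  have hsplit := intervalIntegral.integral_Iic_add_Ioi (b := 0) hint.integrableOn hint.integrableOn
  rw [integral_gaussianPDFReal_eq_one 0 one_ne_zero, integral_Ioi_zero_gaussianPDFReal] at hsplit
  rw [cdf_eq_real, measureReal_def, gaussianReal_apply_eq_integral 0 one_ne_zero,
    ENNReal.toReal_ofReal
      (setIntegral_nonneg measurableSet_Iic fun y _ ↦ gaussianPDFReal_nonneg 0 1 y)]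
  linarith

lemma image_Ioi_zero_cdf_gaussianReal : Φ '' Ioi 0 = Ioo (1 / 2) 1 := by
  refine subset_antisymm ?_ ?_
  · rintro _ ⟨u, hu, rfl⟩
    exact ⟨cdf_gaussianReal_zero ▸ strictMono_cdf_gaussianReal hu, cdf_gaussianReal_lt_one u⟩
  · rw [← cdf_gaussianReal_zero]
    exact isPreconnected_Ioi.intermediate_value_Ioo (l₁ := 𝓝[>] 0)
      (le_principal_iff.mpr self_mem_nhdsWithin) (le_principal_iff.mpr (Ioi_mem_atTop 0))
      continuous_cdf_gaussianReal.continuousOn continuous_cdf_gaussianReal.continuousWithinAt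
      (tendsto_cdf_atTop _)

lemma integral_Ioo_half_one_eq_integral_Ioi_zero (g : ℝ → ℝ) :
    ∫ v in Ioo (1 / 2) 1, g v = ∫ u in Ioi 0, φ u * g (Φ u) := by
  rw [← image_Ioi_zero_cdf_gaussianReal,
    integral_image_eq_integral_abs_deriv_smul measurableSet_Ioi
      (fun u _ ↦ (hasDerivAt_cdf_gaussianReal 0 one_ne_zero u).hasDerivWithinAt)
      strictMono_cdf_gaussianReal.injective.injOn]
  simp only [abs_of_pos (gaussianPDFReal_pos 0 1 _ one_ne_zero), smul_eq_mul]

lemma integrable_gaussianPDFReal_mul_id : Integrable fun u ↦ φ u * u := by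
  refine ((integrable_mul_exp_neg_mul_sq (b := 1 / 2) (by norm_num)).const_mul
    (√(2 * π))⁻¹).congr (.of_forall fun u ↦ ?_)
  simp only [gaussianPDFReal, NNReal.coe_one, mul_one, sub_zero]
  ring_nf

lemma integral_Ioi_zero_gaussianPDFReal_mul_gaussianPDFReal_mul (γ : ℝ) :
    ∫ u in Ioi 0, φ u * (φ (γ * u) * u) = (2 * π)⁻¹ * (1 + γ ^ 2)⁻¹ := by
  have hb : 0 < (1 + γ ^ 2) / 2 := by positivity
  calc ∫ u in Ioi 0, φ u * (φ (γ * u) * u)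
      = ∫ u in Ioi 0, (2 * π)⁻¹ * (u * exp (-((1 + γ ^ 2) / 2) * u ^ 2)) := by
        congr 1; ext u
        rw [← mul_assoc, gaussianPDFReal_zero_one_mul]
        ring_nf
    _ = (2 * π)⁻¹ * (1 + γ ^ 2)⁻¹ := by
        rw [integral_const_mul, integral_Ioi_mul_exp_neg_mul_sq hb]
        ring

lemma integrable_gaussianPDFReal_mul_cdf_gaussianReal (γ : ℝ) :
    Integrable fun u ↦ φ u * Φ (γ * u) :=
  (integrable_gaussianPDFReal 0 1).mul_bdd (c := 1)
    (continuous_cdf_gaussianReal.comp (continuous_const_mul γ)).aestronglyMeasurable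
    (.of_forall fun u ↦ by
      rw [Real.norm_of_nonneg (cdf_nonneg _ _)]; exact cdf_le_one _ _)

lemma hasDerivAt_integral_Ioi_zero_gaussianPDFReal_mul_cdf_gaussianReal (γ : ℝ) :
    HasDerivAt (fun γ ↦ ∫ u in Ioi 0, φ u * Φ (γ * u)) ((2 * π)⁻¹ * (1 + γ ^ 2)⁻¹) γ := by
  have hdiff := hasDerivAt_integral_of_dominated_loc_of_deriv_le
    (μ := volume.restrict (Ioi 0)) (x₀ := γ)
    (F' := fun γ u ↦ φ u * (φ (γ * u) * u)) (bound := fun u ↦ φ 0 * (φ u * u))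
    univ_mem (.of_forall fun γ ↦
      (integrable_gaussianPDFReal_mul_cdf_gaussianReal γ).aestronglyMeasurable.restrict)
    (integrable_gaussianPDFReal_mul_cdf_gaussianReal γ).integrableOn
    (by fun_prop : Continuous _).aestronglyMeasurable ?_
    (integrable_gaussianPDFReal_mul_id.const_mul _).integrableOn
    (.of_forall fun u γ _ ↦ ((hasDerivAt_cdf_gaussianReal 0 one_ne_zero (γ * u)).comp γ
      (hasDerivAt_mul_const u)).const_mul (φ u))
  · rw [← integral_Ioi_zero_gaussianPDFReal_mul_gaussianPDFReal_mul]
    exact hdiff.2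
  · refine (ae_restrict_iff' measurableSet_Ioi).mpr (.of_forall fun u hu γ _ ↦ ?_)
    have hφu : 0 ≤ φ u * u := mul_nonneg (gaussianPDFReal_nonneg 0 1 u) (le_of_lt hu)
    rw [mul_left_comm, Real.norm_of_nonneg (mul_nonneg (gaussianPDFReal_nonneg ..) hφu)]
    exact mul_le_mul_of_nonneg_right (gaussianPDFReal_le_gaussianPDFReal_self 0 1 _) hφu

lemma integral_Ioi_zero_gaussianPDFReal_mul_cdf_gaussianReal (γ : ℝ) :
    ∫ u in Ioi 0, φ u * Φ (γ * u) = 1 / 4 + arctan γ / (2 * π) := by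
  have h₀ : ∫ u in Ioi 0, φ u * Φ (0 * u) = 1 / 4 := by
    simp_rw [zero_mul, cdf_gaussianReal_zero, integral_mul_const, integral_Ioi_zero_gaussianPDFReal]
    norm_num
  have hcont : Continuous fun x : ℝ ↦ (2 * π)⁻¹ * (1 + x ^ 2)⁻¹ :=
    continuous_const.mul ((continuous_const.add (continuous_pow 2)).inv₀
      fun x ↦ (by positivity : (0 : ℝ) < 1 + x ^ 2).ne')
  have hftc := intervalIntegral.integral_eq_sub_of_hasDerivAt (a := 0) (b := γ)
    (fun x _ ↦ hasDerivAt_integral_Ioi_zero_gaussianPDFReal_mul_cdf_gaussianReal x)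
    (hcont.intervalIntegrable 0 γ)
  rw [intervalIntegral.integral_const_mul, h₀] at hftc
  simp only [integral_inv_one_add_sq, arctan_zero, sub_zero] at hftc
  linear_combination -hftc

lemma intervalIntegral_cdf_gaussianReal_mul_quantile (Φinv : ℝ → ℝ)
    (hΦinv : ∀ p ∈ Ioo 0 1, Φ (Φinv p) = p) (γ : ℝ) :
    ∫ v in (1 / 2)..1, Φ (γ * Φinv v) = 1 / 4 + arctan γ / (2 * π) := by
  rw [intervalIntegral.integral_of_le (by norm_num), integral_Ioc_eq_integral_Ioo,
    integral_Ioo_half_one_eq_integral_Ioi_zero,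
    ← integral_Ioi_zero_gaussianPDFReal_mul_cdf_gaussianReal γ]
  refine setIntegral_congr_fun measurableSet_Ioi fun u hu ↦ ?_
  have hmem : Φ u ∈ Ioo 0 1 :=
    ⟨(cdf_nonneg _ _).trans_lt (strictMono_cdf_gaussianReal hu), cdf_gaussianReal_lt_one u⟩
  rw [strictMono_cdf_gaussianReal.injective (hΦinv _ hmem)]

end StdNormal

/-- **Closed form for `ψ(γ) = 4∫_{1/2}^1 Φ(γ Φ⁻¹(v)) dv`.** For any right inverse `Φinv`
of the standard normal cdf on `(0,1)` and every `γ ≥ 0`,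
`ψ(γ) = 1 + (2/π) arctan γ`; in particular `ψ(1) = 3/2`. -/
theorem psi_integral_eq_arctan
    (Φinv : ℝ → ℝ) (hΦinv : ∀ p ∈ Set.Ioo (0 : ℝ) 1, stdNormalCDF (Φinv p) = p) :
    (∀ γ : ℝ, 0 ≤ γ →
        4 * ∫ v in (1 / 2 : ℝ)..1, stdNormalCDF (γ * Φinv v)
          = 1 + (2 / Real.pi) * Real.arctan γ) ∧
      4 * (∫ v in (1 / 2 : ℝ)..1, stdNormalCDF (1 * Φinv v)) = 3 / 2 := by
  rw [stdNormalCDF_eq_cdf] at hΦinv ⊢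
  have hψ (γ : ℝ) : 4 * ∫ v in (1 / 2 : ℝ)..1, cdf (gaussianReal 0 1) (γ * Φinv v)
      = 1 + (2 / π) * arctan γ := by
    rw [intervalIntegral_cdf_gaussianReal_mul_quantile Φinv hΦinv]
    field_simp
    ring
  refine ⟨fun γ _ ↦ hψ γ, ?_⟩
  rw [hψ, arctan_one]
  field_simp
  ring
end
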